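/- Let n and j be natural numbers with 2j ≤ n and n ≥ 2j+2. Then C(n+2j−2, 2j) · ∑_{k=0}^{n} [(−n)_k (−j)_k (1/2−j)_k]/[(1−j−n/2)_k ((3−n)/2−j)_k · k!] = C(n,2j) − C(n,2j−1), i.e. I_{2j,n}(n) = n(n−1)···(n−2j+2)·(n+1−4j)/(2j)!. -/

import Mathlib

/-!
By the duplication formula `(a/2)_k ((a+1)/2)_k 4^k = (a)_{2k}`, the two Pochhammer pairs
`(-j)_k (1/2-j)_k` and `(1-j-n/2)_k ((3-n)/2-j)_k` become descending factorials of `2j` and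
`n+2j-2`, so after multiplication by `C(n+2j-2, 2j)` the `k`-th term of the ₃F₂ is
`(-1)^k C(n,k) C(n-2+2(j-k), n-2)`. This alternating sum is the coefficient of `x^{2j}` in
`(1-x²)^n / (1-x)^{n-1} = (1+x)^n (1-x)`, i.e. `C(n,2j) - C(n,2j-1)`.
-/

/-- Rising factorial (Pochhammer symbol) on ℚ. -/
def poch (x : ℚ) : ℕ → ℚ
  | 0 => 1
  | k + 1 => poch x k * (x + k)

open Finset PowerSeries

lemma poch_eq_eval_ascPochhammer (x : ℚ) (k : ℕ) : poch x k = (ascPochhammer ℚ k).eval x := by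
  induction k with
  | zero => simp [poch]
  | succ k ih => rw [poch, ascPochhammer_succ_eval, ih]

lemma poch_neg_natCast (N k : ℕ) : poch (-N) k = (-1) ^ k * N.descFactorial k := by
  rw [poch_eq_eval_ascPochhammer, ascPochhammer_eval_neg_eq_descPochhammer,
    descPochhammer_eval_eq_descFactorial]

lemma poch_neg_natCast_eq_zero {N k : ℕ} (h : N < k) : poch (-N) k = 0 := by
  rw [poch_neg_natCast, Nat.descFactorial_eq_zero_iff_lt.2 h, Nat.cast_zero, mul_zero]

lemma poch_div_two_mul_poch_add_one_div_two (a : ℚ) (k : ℕ) :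
    poch (a / 2) k * poch ((a + 1) / 2) k * 4 ^ k = poch a (2 * k) := by
  induction k with
  | zero => simp [poch]
  | succ k ih =>
    rw [show 2 * (k + 1) = 2 * k + 1 + 1 by ring, poch, poch, poch, poch, ← ih]
    push_cast
    ring

lemma poch_neg_natCast_div_two_mul (N k : ℕ) :
    poch (-N / 2) k * poch ((-N + 1) / 2) k * 4 ^ k = N.descFactorial (2 * k) := by
  rw [poch_div_two_mul_poch_add_one_div_two, poch_neg_natCast, pow_mul]
  norm_num

lemma Nat.choose_mul_descFactorial (n k s : ℕ) (hsk : s ≤ k) :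
    n.choose k * k.descFactorial s = n.descFactorial s * (n - s).choose (k - s) := by
  rw [descFactorial_eq_factorial_mul_choose, descFactorial_eq_factorial_mul_choose,
    mul_left_comm, Nat.choose_mul hsk, mul_assoc]

lemma choose_mul_hypergeometric_term (n j k : ℕ) (hn : 2 ≤ n) (hkj : k ≤ j) :
    ((n + 2 * j - 2).choose (2 * j) : ℚ) *
      (poch (-(n : ℚ)) k * poch (-(j : ℚ)) k * poch (1 / 2 - (j : ℚ)) k
        / (poch (1 - (j : ℚ) - (n : ℚ) / 2) k * poch ((3 - (n : ℚ)) / 2 - (j : ℚ)) k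
            * (k.factorial : ℚ)))
      = (-1) ^ k * n.choose k * (n - 2 + 2 * (j - k)).choose (n - 2) := by
  set M := n + 2 * j - 2
  have hM : (M : ℚ) = n + 2 * j - 2 := by
    simp only [M]; push_cast [Nat.cast_sub (show 2 ≤ n + 2 * j by omega)]; ring
  have hnum : poch (-(j : ℚ)) k * poch (1 / 2 - (j : ℚ)) k * 4 ^ k
      = (2 * j).descFactorial (2 * k) := by
    rw [← poch_neg_natCast_div_two_mul]; push_cast; ring_nf
  have hden : poch (1 - (j : ℚ) - (n : ℚ) / 2) k * poch ((3 - (n : ℚ)) / 2 - (j : ℚ)) k * 4 ^ k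
      = M.descFactorial (2 * k) := by
    rw [← poch_neg_natCast_div_two_mul, hM]; ring_nf
  have hchoose : (M.choose (2 * j) * (2 * j).descFactorial (2 * k) : ℚ)
      = M.descFactorial (2 * k) * (n - 2 + 2 * (j - k)).choose (n - 2) := by
    rw [Nat.choose_symm_add, show n - 2 + 2 * (j - k) = M - 2 * k by omega,
      show 2 * (j - k) = 2 * j - 2 * k by omega]
    exact_mod_cast Nat.choose_mul_descFactorial M (2 * j) (2 * k) (by omega)
  have hMk : (M.descFactorial (2 * k) : ℚ) ≠ 0 := by
    exact_mod_cast (Nat.descFactorial_pos.mpr (by omega)).ne'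
  have h4 : (4 : ℚ) ^ k ≠ 0 := by positivity
  rw [mul_assoc (poch _ k), eq_div_of_mul_eq h4 hnum, eq_div_of_mul_eq h4 hden,
    poch_neg_natCast, n.descFactorial_eq_factorial_mul_choose]
  push_cast
  field_simp
  linear_combination (n.choose k : ℚ) * hchoose

section PowerSeries

variable {R : Type*} [CommRing R]

lemma PowerSeries.coeff_two_mul_one_sub_X_sq_pow_mul (n j : ℕ) (f : R⟦X⟧) :
    coeff (2 * j) ((1 - X ^ 2) ^ n * f)
      = ∑ k ∈ range (j + 1), (-1) ^ k * n.choose k * coeff (2 * (j - k)) f := by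
  set c : ℕ → R := fun k ↦ (-1) ^ k * n.choose k
  set g : ℕ → R := fun k ↦ if k ≤ j then c k * coeff (2 * (j - k)) f else 0
  have hexpand : (1 - X ^ 2 : R⟦X⟧) ^ n = ∑ k ∈ range (n + 1), C (c k) * X ^ (2 * k) := by
    rw [sub_eq_neg_add, add_pow]
    refine sum_congr rfl fun k _ => ?_
    simp only [c, one_pow, mul_one, map_mul, map_pow, map_neg, map_one, map_natCast]
    rw [neg_pow, ← pow_mul]
    ring
  have hterm (k : ℕ) : coeff (2 * j) (C (c k) * X ^ (2 * k) * f) = g k := by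
    rw [mul_assoc, coeff_C_mul, coeff_X_pow_mul']
    by_cases hk : k ≤ j
    · rw [if_pos (by omega), ← Nat.mul_sub]
      exact (if_pos hk).symm
    · rw [if_neg (by omega), mul_zero]
      exact (if_neg hk).symm
  calc coeff (2 * j) ((1 - X ^ 2) ^ n * f)
      = ∑ k ∈ range (n + 1), g k := by
        simp only [hexpand, sum_mul, map_sum, hterm]
    _ = ∑ k ∈ range (n + j + 1), g k := by
        refine sum_subset (range_subset_range.2 (by omega)) fun k _ hk => ?_
        simp [g, c, Nat.choose_eq_zero_of_lt (not_lt.1 (mem_range.not.1 hk) : n < k)]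
    _ = ∑ k ∈ range (j + 1), g k := by
        refine (sum_subset (range_subset_range.2 (by omega)) fun k _ hk => ?_).symm
        exact if_neg (by simpa using hk)
    _ = _ := sum_congr rfl fun k hk => if_pos (by simpa [Nat.lt_succ_iff] using hk)

lemma PowerSeries.coeff_one_add_X_pow (n m : ℕ) : coeff m ((1 + X : R⟦X⟧) ^ n) = n.choose m := by
  rw [show (1 + X : R⟦X⟧) ^ n = ((1 + Polynomial.X) ^ n : Polynomial R) by simp,
    Polynomial.coeff_coe, Polynomial.coeff_one_add_X_pow]

lemma PowerSeries.coeff_succ_one_add_X_pow_mul_one_sub_X (n m : ℕ) :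
    coeff (m + 1) ((1 + X : R⟦X⟧) ^ n * (1 - X)) = (n.choose (m + 1) : R) - n.choose m := by
  rw [mul_one_sub, map_sub, coeff_succ_mul_X, coeff_one_add_X_pow, coeff_one_add_X_pow]

lemma sum_neg_one_pow_mul_choose_mul_choose (d j : ℕ) :
    ∑ k ∈ range (j + 1), (-1) ^ k * ((d + 2).choose k : R) * (d + 2 * (j - k)).choose d
      = coeff (2 * j) ((1 + X : R⟦X⟧) ^ (d + 2) * (1 - X)) := by
  have hG := mk_add_choose_mul_one_sub_pow_eq_one R d
  have hgen : (1 - X ^ 2 : R⟦X⟧) ^ (d + 2) * mk (fun t ↦ ((d + t).choose d : R))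
      = (1 + X) ^ (d + 2) * (1 - X) := by
    rw [show (1 - X ^ 2 : R⟦X⟧) = (1 + X) * (1 - X) by ring, mul_pow]
    linear_combination ((1 + X : R⟦X⟧) ^ (d + 2) * (1 - X)) * hG
  rw [← hgen, coeff_two_mul_one_sub_X_sq_pow_mul]
  simp only [coeff_mk]

end PowerSeries

theorem dimension_even_full_resonance_general (n j : ℕ) (hj : 1 ≤ j) (h2 : 2 * j ≤ n) :
    (Nat.choose (n + 2 * j - 2) (2 * j) : ℚ)
        * ∑ k ∈ Finset.range (n + 1),
            poch (-(n : ℚ)) k * poch (-(j : ℚ)) k * poch (1 / 2 - (j : ℚ)) k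
              / (poch (1 - (j : ℚ) - (n : ℚ) / 2) k * poch ((3 - (n : ℚ)) / 2 - (j : ℚ)) k
                  * (Nat.factorial k : ℚ))
      = (Nat.choose n (2 * j) : ℚ) - (Nat.choose n (2 * j - 1) : ℚ) := by
  rw [← sum_subset (range_subset_range.2 (show j + 1 ≤ n + 1 by omega)), mul_sum,
    sum_congr rfl fun k hk ↦ choose_mul_hypergeometric_term n j k (by omega)
      (Nat.lt_succ_iff.1 (mem_range.1 hk))]
  · obtain ⟨d, rfl⟩ : ∃ d, n = d + 2 := ⟨n - 2, by omega⟩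
    obtain ⟨m, hm⟩ : ∃ m, 2 * j = m + 1 := ⟨2 * j - 1, by omega⟩
    simp only [Nat.add_sub_cancel]
    rw [sum_neg_one_pow_mul_choose_mul_choose, hm, coeff_succ_one_add_X_pow_mul_one_sub_X,
      Nat.add_sub_cancel]
  · intro k _ hk
    rw [poch_neg_natCast_eq_zero (N := j) (by simpa using hk), mul_zero, zero_mul, zero_div]

/-- I_{2j,n}(n) = C(n,2j) − C(n,2j−1): even case of Theorem 2(1). -/
theorem dimension_even_full_resonance (n j : ℕ) (hj : 1 ≤ j) (h2 : 2 * j ≤ n)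
    (h3 : n ≥ 2 * j + 2) :
    (Nat.choose (n + 2 * j - 2) (2 * j) : ℚ)
        * ∑ k ∈ Finset.range (n + 1),
            poch (-(n : ℚ)) k * poch (-(j : ℚ)) k * poch (1 / 2 - (j : ℚ)) k
              / (poch (1 - (j : ℚ) - (n : ℚ) / 2) k * poch ((3 - (n : ℚ)) / 2 - (j : ℚ)) k
                  * (Nat.factorial k : ℚ))
      = (Nat.choose n (2 * j) : ℚ) - (Nat.choose n (2 * j - 1) : ℚ) :=
  dimension_even_full_resonance_general n j hj h2
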